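/- arXiv:2601.17695 — 2 statements merged into one kernel-verified Lean document; each statement's English description precedes it below -/
import Mathlib

section
/- In the bidirectional structural model under Assumption 1, suppose σ > 0, μxz ≠ 0, μyw ≠ 0, βxy·βyx ≠ 1 and βxy·βyx ≠ −1. Define c = 1/(1 − βxy·βyx), λ1 = σ²c²(1 + βyx²), λ2 = σ²c²(1 + βxy²), and the Probit coefficients ξxz = c·μxz/√λ1, ξxw = c·βyx·μyw/√λ1, ξyz = c·βxy·μxz/√λ2, ξyw = c·μyw/√λ2. Then the reverse causal effect is identified by the formula βyx = (ξxw/ξyw)·√((ξyz²·ξyw² − ξxz²·ξyw²)/(ξxw²·ξxz² − ξxz²·ξyw²)). -/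
/-!
Write `r = √λ1 / √λ2`. The Probit coefficients satisfy `ξxw = βyx ξyw / r` and `ξyz = βxy r ξxz`,
so the quotient under the root is `r² (βxy² r² - 1) / (βyx² - r²)`. Because
`r² (1 + βxy²) = 1 + βyx²`, numerator and denominator factors agree and the quotient is `r²`;
hence `(ξxw / ξyw) · r = βyx`. The cancelled factor is
`βxy² r² - 1 = (βxy² βyx² - 1) / (1 + βxy²) ≠ 0`.
-/

open Real

theorem sq_mul_sq_ne_one {a b : ℝ} (h1 : a * b ≠ 1) (h2 : a * b ≠ -1) : a ^ 2 * b ^ 2 ≠ 1 := by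
  intro h
  have : (a * b - 1) * (a * b + 1) = 0 := by linear_combination h
  rcases mul_eq_zero.1 this with h' | h'
  · exact h1 (by linarith)
  · exact h2 (by linarith)

theorem eq_mul_sqrt_of_probit_coeffs {a b r xz xw yz yw : ℝ} (hr : 0 < r) (hxz : xz ≠ 0)
    (hyw : yw ≠ 0) (hr2 : r ^ 2 * (1 + a ^ 2) = 1 + b ^ 2) (hab : a ^ 2 * b ^ 2 ≠ 1)
    (hxw : xw = b * yw / r) (hyz : yz = a * r * xz) :
    b = (xw / yw) * √((yz ^ 2 * yw ^ 2 - xz ^ 2 * yw ^ 2) /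
      (xw ^ 2 * xz ^ 2 - xz ^ 2 * yw ^ 2)) := by
  have hdiff : b ^ 2 - r ^ 2 = a ^ 2 * r ^ 2 - 1 := by linear_combination -hr2
  have hfactor : a ^ 2 * r ^ 2 - 1 ≠ 0 := by
    intro h
    apply hab
    linear_combination (1 + a ^ 2) * h - a ^ 2 * hr2
  have hnum : yz ^ 2 * yw ^ 2 - xz ^ 2 * yw ^ 2 = xz ^ 2 * yw ^ 2 * (a ^ 2 * r ^ 2 - 1) := by
    rw [hyz]; ring
  have hden : xw ^ 2 * xz ^ 2 - xz ^ 2 * yw ^ 2 = xz ^ 2 * yw ^ 2 * (a ^ 2 * r ^ 2 - 1) / r ^ 2 := by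
    rw [hxw, ← hdiff]; field_simp
  have hquot : (yz ^ 2 * yw ^ 2 - xz ^ 2 * yw ^ 2) / (xw ^ 2 * xz ^ 2 - xz ^ 2 * yw ^ 2) = r ^ 2 := by
    rw [hnum, hden, div_div_eq_mul_div, mul_div_cancel_left₀]
    exact mul_ne_zero (mul_ne_zero (pow_ne_zero _ hxz) (pow_ne_zero _ hyw)) hfactor
  rw [hquot, sqrt_sq hr.le, hxw]
  field_simp

theorem stmt_6_general (μxz μyw βxy βyx σ : ℝ)
    (hσ : 0 < σ) (hμxz : μxz ≠ 0) (hμyw : μyw ≠ 0)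
    (h1 : βxy * βyx ≠ 1) (h2 : βxy * βyx ≠ -1)
    (c lam1 lam2 ξxz ξxw ξyz ξyw : ℝ)
    (hc : c = 1 / (1 - βxy * βyx))
    (hlam1 : lam1 = σ ^ 2 * c ^ 2 * (1 + βyx ^ 2))
    (hlam2 : lam2 = σ ^ 2 * c ^ 2 * (1 + βxy ^ 2))
    (hξxz : ξxz = c * μxz / Real.sqrt lam1)
    (hξxw : ξxw = c * βyx * μyw / Real.sqrt lam1)
    (hξyz : ξyz = c * βxy * μxz / Real.sqrt lam2)
    (hξyw : ξyw = c * μyw / Real.sqrt lam2) :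
    βyx = (ξxw / ξyw) * Real.sqrt ((ξyz ^ 2 * ξyw ^ 2 - ξxz ^ 2 * ξyw ^ 2) /
      (ξxw ^ 2 * ξxz ^ 2 - ξxz ^ 2 * ξyw ^ 2)) := by
  have hc0 : c ≠ 0 := by rw [hc]; exact one_div_ne_zero (sub_ne_zero.2 (Ne.symm h1))
  have hpos1 : 0 < lam1 := by rw [hlam1]; positivity
  have hpos2 : 0 < lam2 := by rw [hlam2]; positivity
  have hs1 : √lam1 ≠ 0 := (sqrt_pos.2 hpos1).ne'
  have hs2 : √lam2 ≠ 0 := (sqrt_pos.2 hpos2).ne'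
  refine eq_mul_sqrt_of_probit_coeffs (a := βxy) (r := √lam1 / √lam2)
    (div_pos (sqrt_pos.2 hpos1) (sqrt_pos.2 hpos2)) ?_ ?_ ?_ (sq_mul_sq_ne_one h1 h2) ?_ ?_
  · rw [hξxz]; exact div_ne_zero (mul_ne_zero hc0 hμxz) hs1
  · rw [hξyw]; exact div_ne_zero (mul_ne_zero hc0 hμyw) hs2
  · rw [div_pow, sq_sqrt hpos1.le, sq_sqrt hpos2.le, hlam1, hlam2]
    field_simp
  · rw [hξxw, hξyw]; field_simp
  · rw [hξyz, hξxz]; field_simp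

/-- Proposition 1, reverse direction: identification of the
reverse causal effect in the bidirectional structural model under Assumption 1. -/
theorem stmt_6 (μx0 μy0 μxz μyw βxy βyx σ : ℝ)
    (hσ : 0 < σ) (hμxz : μxz ≠ 0) (hμyw : μyw ≠ 0)
    (h1 : βxy * βyx ≠ 1) (h2 : βxy * βyx ≠ -1)
    (c lam1 lam2 ξxz ξxw ξyz ξyw : ℝ)
    (hc : c = 1 / (1 - βxy * βyx))
    (hlam1 : lam1 = σ ^ 2 * c ^ 2 * (1 + βyx ^ 2))
    (hlam2 : lam2 = σ ^ 2 * c ^ 2 * (1 + βxy ^ 2))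
    (hξxz : ξxz = c * μxz / Real.sqrt lam1)
    (hξxw : ξxw = c * βyx * μyw / Real.sqrt lam1)
    (hξyz : ξyz = c * βxy * μxz / Real.sqrt lam2)
    (hξyw : ξyw = c * μyw / Real.sqrt lam2) :
    βyx = (ξxw / ξyw) * Real.sqrt ((ξyz ^ 2 * ξyw ^ 2 - ξxz ^ 2 * ξyw ^ 2) /
      (ξxw ^ 2 * ξxz ^ 2 - ξxz ^ 2 * ξyw ^ 2)) :=
  stmt_6_general μxz μyw βxy βyx σ hσ hμxz hμyw h1 h2 c lam1 lam2 ξxz ξxw ξyz ξyw hc hlam1 hlam2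
    hξxz hξxw hξyz hξyw
end

section
/- (Corollary 1.) In the extended bidirectional structural model with direct instrument effect η of Z on Y° and δ = 0, under Assumption 1 (confounders independent with equal variance σ² > 0), suppose βxy·βyx ≠ 1, μxz ≠ 0, μyw ≠ 0, μxz + βyx·η ≠ 0 and βxy·μxz + η ≠ 0. Define c = 1/(1 − βxy·βyx), λ1 = σ²c²(1 + βyx²), λ2 = σ²c²(1 + βxy²), ξxz = c(μxz + βyx·η)/√λ1, ξxw = c·βyx·μyw/√λ1, ξyz = c(βxy·μxz + η)/√λ2, ξyw = c·μyw/√λ2, η0 = η/μxz, t1 = ξxw/ξxz, t2 = ξyz/ξyw, t3 = ξxz/ξyz, t4 = ξxw/ξyw, s1 = η0²(t1t2 − 1)² − t1t2t3t4 + 1, s2 = 2t1t2η0(t1t2 − 1), s3 = t1t2(t1t2 − t3t4). Then: (i) s1·βyx² + s2·βyx + s3 = 0; (ii) βyx has the same sign as t4 (both zero simultaneously); and (iii) if βyx ≠ 0 then βxy = η0(t1t2 − 1) + t1t2/βyx. -/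
/-!
The common factors `c / √λᵢ` cancel in every ratio `tᵢ`: with `A = μxz + βyx η`,
`B = βxy μxz + η` and `r = √λ₂ / √λ₁ > 0` one gets `t₁ t₂ A = βyx B`, `t₃ B = r A` and
`t₄ = r βyx`, where `r² (1 + βyx²) = 1 + βxy²`. Writing `p = t₁ t₂` and `q = t₃ t₄`, this gives
`η₀ (p - 1) βyx + p = βxy βyx` and `p q (1 + βyx²) = βyx² (1 + βxy²)`. The first is (iii) after
division by `βyx`; substituting it into the second eliminates `βxy` and leaves the quadratic (i).
-/

theorem Real.sign_mul_of_pos {r : ℝ} (hr : 0 < r) (x : ℝ) : Real.sign (r * x) = Real.sign x := by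
  rcases lt_trichotomy x 0 with hx | rfl | hx
  · rw [Real.sign_of_neg hx, Real.sign_of_neg (mul_neg_of_pos_of_neg hr hx)]
  · rw [mul_zero]
  · rw [Real.sign_of_pos hx, Real.sign_of_pos (mul_pos hr hx)]

theorem mul_div_div_mul_div {K : Type*} [Field K] {c : K} (hc : c ≠ 0) (a b s s' : K) :
    c * a / s / (c * b / s') = s' / s * (a / b) := by
  rw [mul_div_assoc, mul_div_assoc c b, mul_div_mul_left _ _ hc, div_div_div_eq]
  ring

theorem sq_sqrt_mul_div_sqrt_mul_mul {k x y : ℝ} (hk : 0 < k) (hx : 0 < x) (hy : 0 ≤ y) :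
    (√(k * y) / √(k * x)) ^ 2 * x = y := by
  rw [div_pow, Real.sq_sqrt (by positivity), Real.sq_sqrt (by positivity)]
  field_simp

section LinearRelation

variable {K : Type*} [Field K] {e p q β b : K}

theorem quadratic_of_linear_relation (hp : e * (p - 1) * β + p = b * β)
    (hq : p * q * (1 + β ^ 2) = β ^ 2 * (1 + b ^ 2)) :
    (e ^ 2 * (p - 1) ^ 2 - p * q + 1) * β ^ 2 + 2 * p * e * (p - 1) * β + p * (p - q) = 0 := by
  linear_combination (e * (p - 1) * β + p + b * β) * hp - hq

theorem eq_of_linear_relation (hp : e * (p - 1) * β + p = b * β) (hβ : β ≠ 0) :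
    b = e * (p - 1) + p / β := by
  field_simp
  linear_combination -hp

end LinearRelation

section RatioRelations

variable {K : Type*} [Field K] {μxz η βxy βyx η0 p q r : K}

theorem linear_relation_of_ratio (hμxz : μxz ≠ 0) (hη0 : η0 = η / μxz)
    (hp : p * (μxz + βyx * η) = βyx * (βxy * μxz + η)) :
    η0 * (p - 1) * βyx + p = βxy * βyx := by
  refine mul_left_cancel₀ hμxz ?_
  rw [hη0]
  field_simp
  linear_combination hp

theorem product_relation_of_ratios (hxz : μxz + βyx * η ≠ 0) (hyz : βxy * μxz + η ≠ 0)
    (hp : p * (μxz + βyx * η) = βyx * (βxy * μxz + η))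
    (hq : q * (βxy * μxz + η) = r ^ 2 * βyx * (μxz + βyx * η))
    (hr : r ^ 2 * (1 + βyx ^ 2) = 1 + βxy ^ 2) :
    p * q * (1 + βyx ^ 2) = βyx ^ 2 * (1 + βxy ^ 2) := by
  refine mul_left_cancel₀ (mul_ne_zero hxz hyz) ?_
  linear_combination (q * (βxy * μxz + η) * (1 + βyx ^ 2)) * hp
    + βyx * (βxy * μxz + η) * (1 + βyx ^ 2) * hq + βyx ^ 2 * (μxz + βyx * η) * (βxy * μxz + η) * hr

end RatioRelations

theorem stmt_14_general (μxz μyw η βxy βyx σ : ℝ)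
    (hσ : 0 < σ) (hβ : βxy * βyx ≠ 1)
    (hμxz : μxz ≠ 0) (hμyw : μyw ≠ 0)
    (hxz : μxz + βyx * η ≠ 0) (hyz : βxy * μxz + η ≠ 0)
    (c lam1 lam2 ξxz ξxw ξyz ξyw η0 t1 t2 t3 t4 s1 s2 s3 : ℝ)
    (hc : c = 1 / (1 - βxy * βyx))
    (hlam1 : lam1 = σ ^ 2 * c ^ 2 * (1 + βyx ^ 2))
    (hlam2 : lam2 = σ ^ 2 * c ^ 2 * (1 + βxy ^ 2))
    (hξxz : ξxz = c * (μxz + βyx * η) / Real.sqrt lam1)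
    (hξxw : ξxw = c * βyx * μyw / Real.sqrt lam1)
    (hξyz : ξyz = c * (βxy * μxz + η) / Real.sqrt lam2)
    (hξyw : ξyw = c * μyw / Real.sqrt lam2)
    (hη0 : η0 = η / μxz)
    (ht1 : t1 = ξxw / ξxz) (ht2 : t2 = ξyz / ξyw)
    (ht3 : t3 = ξxz / ξyz) (ht4 : t4 = ξxw / ξyw)
    (hs1 : s1 = η0 ^ 2 * (t1 * t2 - 1) ^ 2 - t1 * t2 * t3 * t4 + 1)
    (hs2 : s2 = 2 * t1 * t2 * η0 * (t1 * t2 - 1))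
    (hs3 : s3 = t1 * t2 * (t1 * t2 - t3 * t4)) :
    s1 * βyx ^ 2 + s2 * βyx + s3 = 0 ∧
    Real.sign βyx = Real.sign t4 ∧ (βyx = 0 ↔ t4 = 0) ∧
    (βyx ≠ 0 → βxy = η0 * (t1 * t2 - 1) + t1 * t2 / βyx) := by
  have hc0 : c ≠ 0 := by rw [hc]; exact one_div_ne_zero (sub_ne_zero.mpr hβ.symm)
  have hsqrt1 : 0 < √lam1 := Real.sqrt_pos.mpr (by rw [hlam1]; positivity)
  have hsqrt2 : 0 < √lam2 := Real.sqrt_pos.mpr (by rw [hlam2]; positivity)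
  set r := √lam2 / √lam1 with hr
  have hr_pos : 0 < r := div_pos hsqrt2 hsqrt1
  have hr_sq : r ^ 2 * (1 + βyx ^ 2) = 1 + βxy ^ 2 := by
    rw [hr, hlam1, hlam2]; exact sq_sqrt_mul_div_sqrt_mul_mul (by positivity) (by positivity) (by positivity)
  have hT1 : t1 = βyx * μyw / (μxz + βyx * η) := by
    rw [ht1, hξxw, hξxz, mul_assoc, div_div_div_cancel_right₀ hsqrt1.ne', mul_div_mul_left _ _ hc0]
  have hT2 : t2 = (βxy * μxz + η) / μyw := by
    rw [ht2, hξyz, hξyw, div_div_div_cancel_right₀ hsqrt2.ne', mul_div_mul_left _ _ hc0]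
  have hT3 : t3 * (βxy * μxz + η) = r * (μxz + βyx * η) := by
    rw [ht3, hξxz, hξyz, mul_div_div_mul_div hc0, mul_assoc, div_mul_cancel₀ _ hyz]
  have hT4 : t4 = r * βyx := by
    rw [ht4, hξxw, hξyw, mul_assoc, mul_div_div_mul_div hc0, mul_div_cancel_right₀ _ hμyw]
  have hp : t1 * t2 * (μxz + βyx * η) = βyx * (βxy * μxz + η) := by
    rw [hT1, hT2]; field_simp
  have hq : t3 * t4 * (βxy * μxz + η) = r ^ 2 * βyx * (μxz + βyx * η) := by
    rw [hT4]; linear_combination r * βyx * hT3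
  have hlin := linear_relation_of_ratio hμxz hη0 hp
  refine ⟨?_, ?_, ?_, eq_of_linear_relation hlin⟩
  · rw [hs1, hs2, hs3]
    linear_combination
      quadratic_of_linear_relation hlin (product_relation_of_ratios hxz hyz hp hq hr_sq)
  · rw [hT4, Real.sign_mul_of_pos hr_pos]
  · rw [hT4, mul_eq_zero, or_iff_right hr_pos.ne']

/-- Corollary 1: sensitivity analysis when the instrument `Z`
has a direct effect `η` on `Y°` and `W` is valid (`δ = 0`), under Assumption 1. -/
theorem stmt_14 (μx0 μy0 μxz μyw η βxy βyx σ : ℝ)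
    (hσ : 0 < σ) (hβ : βxy * βyx ≠ 1)
    (hμxz : μxz ≠ 0) (hμyw : μyw ≠ 0)
    (hxz : μxz + βyx * η ≠ 0) (hyz : βxy * μxz + η ≠ 0)
    (c lam1 lam2 ξxz ξxw ξyz ξyw η0 t1 t2 t3 t4 s1 s2 s3 : ℝ)
    (hc : c = 1 / (1 - βxy * βyx))
    (hlam1 : lam1 = σ ^ 2 * c ^ 2 * (1 + βyx ^ 2))
    (hlam2 : lam2 = σ ^ 2 * c ^ 2 * (1 + βxy ^ 2))
    (hξxz : ξxz = c * (μxz + βyx * η) / Real.sqrt lam1)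
    (hξxw : ξxw = c * βyx * μyw / Real.sqrt lam1)
    (hξyz : ξyz = c * (βxy * μxz + η) / Real.sqrt lam2)
    (hξyw : ξyw = c * μyw / Real.sqrt lam2)
    (hη0 : η0 = η / μxz)
    (ht1 : t1 = ξxw / ξxz) (ht2 : t2 = ξyz / ξyw)
    (ht3 : t3 = ξxz / ξyz) (ht4 : t4 = ξxw / ξyw)
    (hs1 : s1 = η0 ^ 2 * (t1 * t2 - 1) ^ 2 - t1 * t2 * t3 * t4 + 1)
    (hs2 : s2 = 2 * t1 * t2 * η0 * (t1 * t2 - 1))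
    (hs3 : s3 = t1 * t2 * (t1 * t2 - t3 * t4)) :
    s1 * βyx ^ 2 + s2 * βyx + s3 = 0 ∧
    Real.sign βyx = Real.sign t4 ∧ (βyx = 0 ↔ t4 = 0) ∧
    (βyx ≠ 0 → βxy = η0 * (t1 * t2 - 1) + t1 * t2 / βyx) :=
  stmt_14_general μxz μyw η βxy βyx σ hσ hβ hμxz hμyw hxz hyz c lam1 lam2 ξxz ξxw ξyz ξyw η0 t1 t2
    t3 t4 s1 s2 s3 hc hlam1 hlam2 hξxz hξxw hξyz hξyw hη0 ht1 ht2 ht3 ht4 hs1 hs2 hs3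
end
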